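/- Let f_c, f_m, c, d > 0, let N ≥ 1, let θ ∈ (−1,1), let r > 0, set η_m = f_c/f_m, and assume η_m²·θ² < 1. Define the spatial (beam-squint shifted) parameters θ̄_m = η_m·θ and r̄_m = (1 − η_m²·θ²)·r / (η_m·(1 − θ²)). Then the steering vectors coincide entrywise: ã(θ̄_m, r̄_m, f_m) = ã(θ, r, f_c). Consequently the array gain satisfies |ã(θ,r,f_c)ᴴ · ã(θ̄_m, r̄_m, f_m)| = 1, which is the maximum possible value of |ã(θ,r,f_c)ᴴ · ã(θ', r', f_m)| over all θ' ∈ (−1,1) and r' > 0. -/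

import Mathlib

open scoped BigOperators

/-- Near-field (Fresnel) steering vector: entry `n` (zero-indexed, corresponding to the
`(n+1)`-th antenna) is `(1/√N)·exp(j·2π·(f/c)·(n·d·θ − n²·d²·ζ))` with `ζ = (1−θ²)/(2r)`. -/
noncomputable def steer (c d f : ℝ) (N : ℕ) (θ r : ℝ) : EuclideanSpace ℂ (Fin N) :=
  WithLp.toLp 2 fun n => ((1 / Real.sqrt N : ℝ) : ℂ) *
    Complex.exp (Complex.I * (2 * Real.pi * (f / c) *
      ((n : ℝ) * d * θ - (n : ℝ) ^ 2 * d ^ 2 * ((1 - θ ^ 2) / (2 * r)))))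

lemma steer_norm (c d f : ℝ) (N : ℕ) (θ r : ℝ) (hN : 1 ≤ N) :
    ‖steer c d f N θ r‖ = 1 := by
  have hNpos : (0:ℝ) < N := by exact_mod_cast hN
  have habs : ∀ n : Fin N, ‖steer c d f N θ r n‖ = 1 / Real.sqrt N := by
    intro n
    simp only [steer, norm_mul, Complex.norm_real]
    have hcast : ((2 : ℂ) * Real.pi * (f / c) *
      ((n : ℝ) * d * θ - (n : ℝ) ^ 2 * d ^ 2 * ((1 - θ ^ 2) / (2 * r)))) =
      (((2 * Real.pi * (f / c) *
      ((n : ℝ) * d * θ - (n : ℝ) ^ 2 * d ^ 2 * ((1 - θ ^ 2) / (2 * r)))) : ℝ) : ℂ) := by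
      push_cast; ring
    rw [hcast, mul_comm Complex.I, Complex.norm_exp_ofReal_mul_I]
    rw [Real.norm_eq_abs, abs_of_nonneg (by positivity : (0:ℝ) ≤ 1 / Real.sqrt N)]
    ring
  rw [EuclideanSpace.norm_eq]
  have : ∑ n : Fin N, ‖steer c d f N θ r n‖ ^ 2 = 1 := by
    simp only [habs]
    rw [Finset.sum_const, Finset.card_univ, Fintype.card_fin, nsmul_eq_mul]
    rw [div_pow, one_pow, Real.sq_sqrt hNpos.le]
    field_simp
  rw [this, Real.sqrt_one]

theorem beam_squint_focusing (c d fc fm : ℝ) (N : ℕ) (θ r : ℝ)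
    (hc : 0 < c) (hd : 0 < d) (hfc : 0 < fc) (hfm : 0 < fm)
    (hN : 1 ≤ N) (hθ : θ ∈ Set.Ioo (-1 : ℝ) 1) (hr : 0 < r)
    (hη : (fc / fm) ^ 2 * θ ^ 2 < 1) :
    (∀ n : Fin N,
      steer c d fm N ((fc / fm) * θ)
          ((1 - (fc / fm) ^ 2 * θ ^ 2) * r / ((fc / fm) * (1 - θ ^ 2))) n
        = steer c d fc N θ r n) ∧
    ‖(inner (𝕜 := ℂ) (steer c d fc N θ r)
        (steer c d fm N ((fc / fm) * θ)
          ((1 - (fc / fm) ^ 2 * θ ^ 2) * r / ((fc / fm) * (1 - θ ^ 2)))))‖ = 1 ∧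
    (∀ θ' r' : ℝ, θ' ∈ Set.Ioo (-1 : ℝ) 1 → 0 < r' →
      ‖(inner (𝕜 := ℂ) (steer c d fc N θ r) (steer c d fm N θ' r'))‖ ≤ 1) := by
  obtain ⟨hθ1, hθ2⟩ := hθ
  have hθsq : θ ^ 2 < 1 := by
    have := abs_lt.mpr ⟨hθ1, hθ2⟩
    nlinarith [abs_nonneg θ, sq_abs θ]
  have h1 : 1 - θ ^ 2 ≠ 0 := by nlinarith
  have h2 : 1 - (fc / fm) ^ 2 * θ ^ 2 ≠ 0 := by nlinarith
  have hfm' : fm ≠ 0 := ne_of_gt hfm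
  have h2' : fm ^ 2 - fc ^ 2 * θ ^ 2 ≠ 0 := by
    have hx : (fc / fm) ^ 2 * θ ^ 2 * fm ^ 2 = fc ^ 2 * θ ^ 2 := by
      field_simp
    have hlt := mul_lt_mul_of_pos_right hη (by positivity : (0:ℝ) < fm ^ 2)
    rw [hx, one_mul] at hlt
    exact ne_of_gt (by linarith)
  have hfc' : fc ≠ 0 := ne_of_gt hfc
  have hc' : c ≠ 0 := ne_of_gt hc
  have hr' : r ≠ 0 := ne_of_gt hr
  have hmain : ∀ n : Fin N,
      steer c d fm N ((fc / fm) * θ)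
          ((1 - (fc / fm) ^ 2 * θ ^ 2) * r / ((fc / fm) * (1 - θ ^ 2))) n
        = steer c d fc N θ r n := by
    intro n
    simp only [steer]
    congr 2
    have hreal : (2 * Real.pi * (fm / c) *
        ((n : ℝ) * d * ((fc / fm) * θ) - (n : ℝ) ^ 2 * d ^ 2 *
          ((1 - ((fc / fm) * θ) ^ 2) /
            (2 * ((1 - (fc / fm) ^ 2 * θ ^ 2) * r / ((fc / fm) * (1 - θ ^ 2)))))))
        = (2 * Real.pi * (fc / c) *
        ((n : ℝ) * d * θ - (n : ℝ) ^ 2 * d ^ 2 * ((1 - θ ^ 2) / (2 * r)))) := by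
      field_simp [h2']
    congr 1
    exact_mod_cast hreal
  refine ⟨hmain, ?_, ?_⟩
  · have heq : steer c d fm N ((fc / fm) * θ)
        ((1 - (fc / fm) ^ 2 * θ ^ 2) * r / ((fc / fm) * (1 - θ ^ 2)))
        = steer c d fc N θ r := by ext n; exact hmain n
    rw [heq]
    have hin : (inner (𝕜 := ℂ) (steer c d fc N θ r) (steer c d fc N θ r))
        = ((‖steer c d fc N θ r‖ : ℝ) : ℂ) ^ 2 := inner_self_eq_norm_sq_to_K _
    rw [hin, steer_norm c d fc N θ r hN]
    simp
  · intro θ' r' _ _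
    calc ‖inner (𝕜 := ℂ) (steer c d fc N θ r) (steer c d fm N θ' r')‖
        ≤ ‖steer c d fc N θ r‖ * ‖steer c d fm N θ' r'‖ := norm_inner_le_norm _ _
      _ = 1 := by rw [steer_norm c d fc N θ r hN, steer_norm c d fm N θ' r' hN]; ring
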